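/- The supremum of the expected welfare over all persuasive straightforward signaling schemes equals μ(1) times the supremum of Σ_{k=1}^N Σ_{i=1}^N p_{ik}·(F(k) − r(i)) over all families p = (p_{ik})_{i,k∈{1,…,N}} of nonnegative reals satisfying: (M_i) Σ_{k=1}^N p_{ik}·(F(k) − r(i)) ≥ 0 for every i; (S_i) Σ_{k=1}^{N−1} ((1/k)·Σ_{j=1}^N p_{jk} − p_{ik})·(F(k+1) − r(i)) + (1 − Σ_{k=1}^N (1/k)·Σ_{j=1}^N p_{jk})·(F(1) − r(i)) ≤ (μ(0)/μ(1))·r(i) for every i; (C) Σ_{k=1}^N (1/k)·Σ_{i=1}^N p_{ik} ≤ 1; and (V) k·p_{ik} ≤ Σ_{j=1}^N p_{jk} for every i,k. -/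

import Mathlib

/-!
Both problems are governed by the marginals `p i k`: the probability that `θ = 1`, that `k`
agents are told to move and that `i` is one of them. Under `θ = 1` the welfare and every
obedience constraint of a scheme are linear in these marginals, and (C), (V) hold because they
come from a distribution on sets; under `θ = 0` the welfare is at most `0` and the stay
constraint loses at most `r i`, both with equality when nobody is sent. Conversely, (V) puts
`(p i k)_i` in the hypersimplex `{x ∈ [0, q_k]^N | ∑ x = k q_k}`, whose vertices are indicators
of `k`-sets, so every feasible `p` comes from a persuasive scheme that sends nobody under
`θ = 0` and has welfare `μ(1)` times the LP value. The two sets of values therefore dominate each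
other up to the factor `μ(1)`, so their suprema agree, also when both sets are empty or
unbounded and `sSup` is `0`.
-/

open Finset

noncomputable section

/-- Welfare `W(θ, S) = θ·|S|·F(|S|) − Σ_{i∈S} r(i)`. -/
def W (F r : ℕ → ℝ) (θ : ℕ) (S : Finset ℕ) : ℝ :=
  (θ : ℝ) * S.card * F S.card - ∑ i ∈ S, r i

/-- A straightforward signaling scheme: for each θ ∈ {0,1}, `φ θ` is a probability
distribution over the subsets of the agent set `{1,…,N}`. -/
def IsScheme (N : ℕ) (φ : ℕ → Finset ℕ → ℝ) : Prop :=
  (∀ θ ∈ ({0, 1} : Finset ℕ), ∀ S ∈ (Icc 1 N).powerset, 0 ≤ φ θ S) ∧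
  (∀ θ ∈ ({0, 1} : Finset ℕ), ∑ S ∈ (Icc 1 N).powerset, φ θ S = 1)

/-- Expected welfare with prior μ(1) = μ1, μ(0) = 1 − μ1. -/
def EW (N : ℕ) (F r : ℕ → ℝ) (μ1 : ℝ) (φ : ℕ → Finset ℕ → ℝ) : ℝ :=
  (1 - μ1) * ∑ S ∈ (Icc 1 N).powerset, φ 0 S * W F r 0 S +
  μ1 * ∑ S ∈ (Icc 1 N).powerset, φ 1 S * W F r 1 S

/-- Persuasiveness: the move constraint and the stay constraint for every agent. -/
def Persuasive (N : ℕ) (F r : ℕ → ℝ) (μ1 : ℝ) (φ : ℕ → Finset ℕ → ℝ) : Prop :=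
  ∀ i ∈ Icc 1 N,
    (0 ≤ (1 - μ1) * ∑ S ∈ (Icc 1 N).powerset.filter (fun S => i ∈ S),
            φ 0 S * ((0 : ℝ) * F S.card - r i) +
          μ1 * ∑ S ∈ (Icc 1 N).powerset.filter (fun S => i ∈ S),
            φ 1 S * ((1 : ℝ) * F S.card - r i)) ∧
    ((1 - μ1) * ∑ S ∈ (Icc 1 N).powerset.filter (fun S => i ∉ S),
        φ 0 S * ((0 : ℝ) * F (S.card + 1) - r i) +
      μ1 * ∑ S ∈ (Icc 1 N).powerset.filter (fun S => i ∉ S),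
        φ 1 S * ((1 : ℝ) * F (S.card + 1) - r i) ≤ 0)

/-- `p_{ik}`: probability, conditional on θ = 1, that `k` agents are recommended to
move and agent `i` is among them. -/
def pOf (N : ℕ) (φ : ℕ → Finset ℕ → ℝ) (i k : ℕ) : ℝ :=
  ∑ S ∈ (Icc 1 N).powerset.filter (fun S => i ∈ S ∧ S.card = k), φ 1 S


section SubsetMixture

variable {α : Type*} {U : Finset α} {q : ℝ} {x : α → ℝ}

lemma sum_eq_card_mul_of_forall_eq_zero_or_eq (hx : ∀ i ∈ U, x i = 0 ∨ x i = q) :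
    ∑ i ∈ U, x i = #{i ∈ U | x i = q} * q := by
  rw [← nsmul_eq_mul, ← sum_const, sum_filter]
  refine sum_congr rfl fun i hi => ?_
  rcases hx i hi with h | h <;> simp [h]

variable (U q) in
def fractionalSupport (x : α → ℝ) : Finset α :=
  {i ∈ U | x i ∈ Set.Ioo 0 q}

lemma eq_zero_or_eq_of_notMem_fractionalSupport {i : α} (hi : i ∈ U) (hxi : x i ∈ Set.Icc 0 q)
    (h : i ∉ fractionalSupport U q x) : x i = 0 ∨ x i = q := by
  by_contra! hne
  exact h (mem_filter.2 ⟨hi, lt_of_le_of_ne hxi.1 (Ne.symm hne.1), lt_of_le_of_ne hxi.2 hne.2⟩)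

variable [DecidableEq α]

lemma card_fractionalSupport_ne_one {k : ℕ} (hx : ∀ i ∈ U, x i ∈ Set.Icc 0 q)
    (hsum : ∑ i ∈ U, x i = k * q) : #(fractionalSupport U q x) ≠ 1 := by
  intro h
  obtain ⟨a, ha⟩ := card_eq_one.1 h
  obtain ⟨haU, hxa0, hxaq⟩ := mem_filter.1 (ha ▸ mem_singleton_self a)
  have hrest : ∀ i ∈ U.erase a, x i = 0 ∨ x i = q := fun i hi =>
    eq_zero_or_eq_of_notMem_fractionalSupport (mem_of_mem_erase hi) (hx i (mem_of_mem_erase hi))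
      (by simp [ha, ne_of_mem_erase hi])
  rw [← add_sum_erase _ _ haU, sum_eq_card_mul_of_forall_eq_zero_or_eq hrest] at hsum
  set m := #{i ∈ U.erase a | x i = q}
  -- `x a = (k - m) q` would be a multiple of `q` strictly between `0` and `q`
  rcases le_or_gt k m with hkm | hmk
  · have : (k : ℝ) ≤ m := by exact_mod_cast hkm
    nlinarith
  · have : (m : ℝ) + 1 ≤ k := by exact_mod_cast hmk
    nlinarith

variable (U) in
def IsSubsetMixture (k : ℕ) (q : ℝ) (x : α → ℝ) : Prop :=
  ∃ ψ : Finset α → ℝ, (∀ S ∈ U.powersetCard k, 0 ≤ ψ S) ∧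
    ∑ S ∈ U.powersetCard k, ψ S = q ∧
    ∀ i ∈ U, ∑ S ∈ U.powersetCard k with i ∈ S, ψ S = x i

variable (U) in
lemma convex_setOf_isSubsetMixture (k : ℕ) (q : ℝ) :
    Convex ℝ {x : α → ℝ | IsSubsetMixture U k q x} := by
  rintro y ⟨ψ, hψ0, hψq, hψy⟩ z ⟨χ, hχ0, hχq, hχz⟩ s t hs ht hst
  refine ⟨s • ψ + t • χ, fun S hS => ?_, ?_, fun i hi => ?_⟩
  · have := hψ0 S hS
    have := hχ0 S hS
    simp only [Pi.add_apply, Pi.smul_apply, smul_eq_mul]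
    positivity
  · simp only [Pi.add_apply, Pi.smul_apply, smul_eq_mul, sum_add_distrib, ← mul_sum, hψq, hχq]
    linear_combination q * hst
  · simp only [Pi.add_apply, Pi.smul_apply, smul_eq_mul, sum_add_distrib, ← mul_sum,
      hψy i hi, hχz i hi]

lemma isSubsetMixture_of_forall_eq_zero_or_eq {k : ℕ} (hq : 0 ≤ q)
    (hx : ∀ i ∈ U, x i = 0 ∨ x i = q) (hsum : ∑ i ∈ U, x i = k * q) :
    IsSubsetMixture U k q x := by
  rcases hq.eq_or_lt with rfl | hq
  · refine ⟨0, fun _ _ => le_rfl, by simp, fun i hi => ?_⟩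
    rcases hx i hi with h | h <;> simp [h]
  set T := {i ∈ U | x i = q}
  have hT : T ∈ U.powersetCard k := by
    rw [sum_eq_card_mul_of_forall_eq_zero_or_eq hx] at hsum
    exact mem_powersetCard.2 ⟨filter_subset _ _, by exact_mod_cast mul_right_cancel₀ hq.ne' hsum⟩
  refine ⟨fun S => if S = T then q else 0, fun S _ => by dsimp only; split_ifs <;> positivity,
    by rw [sum_ite_eq', if_pos hT], fun i hi => ?_⟩
  rw [sum_ite_eq']
  rcases hx i hi with h | h <;> simp [T, mem_filter, hT, hi, h, hq.ne]

variable (q) in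
def transfer (x : α → ℝ) (a b : α) : α → ℝ :=
  x + min (q - x a) (x b) • (Pi.single a 1 - Pi.single b 1)

variable {a b : α}

lemma transfer_apply_left (hab : a ≠ b) : transfer q x a b a = x a + min (q - x a) (x b) := by
  simp [transfer, hab]

lemma transfer_apply_right (hab : a ≠ b) : transfer q x a b b = x b - min (q - x a) (x b) := by
  simp [transfer, hab.symm]
  ring

lemma transfer_apply_of_ne {i : α} (hia : i ≠ a) (hib : i ≠ b) : transfer q x a b i = x i := by
  simp [transfer, hia, hib]

lemma sum_transfer (ha : a ∈ U) (hb : b ∈ U) : ∑ i ∈ U, transfer q x a b i = ∑ i ∈ U, x i := by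
  simp [transfer, sum_add_distrib, ← mul_sum, sum_sub_distrib, sum_pi_single', ha, hb]

lemma transfer_mem_Icc (hx : ∀ i ∈ U, x i ∈ Set.Icc 0 q) (ha : a ∈ U) (hb : b ∈ U) (hab : a ≠ b) :
    ∀ i ∈ U, transfer q x a b i ∈ Set.Icc 0 q := by
  intro i hi
  have hmin := min_le_left (q - x a) (x b)
  have hmin' := min_le_right (q - x a) (x b)
  have hmin'' : 0 ≤ min (q - x a) (x b) := le_min (by linarith [(hx a ha).2]) (hx b hb).1
  rcases eq_or_ne i a with rfl | hia
  · rw [transfer_apply_left hab, Set.mem_Icc]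
    constructor <;> linarith [(hx i hi).1]
  rcases eq_or_ne i b with rfl | hib
  · rw [transfer_apply_right hab, Set.mem_Icc]
    constructor <;> linarith [(hx i hi).2]
  · exact transfer_apply_of_ne hia hib ▸ hx i hi

lemma card_fractionalSupport_transfer_lt (ha : a ∈ fractionalSupport U q x)
    (hb : b ∈ fractionalSupport U q x) (hab : a ≠ b) :
    #(fractionalSupport U q (transfer q x a b)) < #(fractionalSupport U q x) := by
  refine card_lt_card ((ssubset_iff_of_subset fun i hi => ?_).2 ?_)
  · rcases eq_or_ne i a with rfl | hia
    · exact ha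
    rcases eq_or_ne i b with rfl | hib
    · exact hb
    simpa [fractionalSupport, transfer_apply_of_ne hia hib] using hi
  · rcases min_choice (q - x a) (x b) with h | h
    · exact ⟨a, ha, by simp [fractionalSupport, transfer_apply_left hab, h]⟩
    · exact ⟨b, hb, by simp [fractionalSupport, transfer_apply_right hab, h]⟩

/-- Shifting mass between two fractional coordinates, in either direction until one of them hits
`0` or `q`, writes `x` as a mixture of two points with fewer fractional coordinates. -/
theorem isSubsetMixture_of_mem_Icc {k : ℕ} (hq : 0 ≤ q) (hx : ∀ i ∈ U, x i ∈ Set.Icc 0 q)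
    (hsum : ∑ i ∈ U, x i = k * q) : IsSubsetMixture U k q x := by
  induction hn : #(fractionalSupport U q x) using Nat.strong_induction_on generalizing x with
  | _ n ih =>
  obtain rfl | hn0 := n.eq_zero_or_pos
  · refine isSubsetMixture_of_forall_eq_zero_or_eq hq (fun i hi => ?_) hsum
    exact eq_zero_or_eq_of_notMem_fractionalSupport hi (hx i hi) (by simp [card_eq_zero.1 hn])
  obtain ⟨a, ha, b, hb, hab⟩ :=
    one_lt_card.1 (show 1 < #(fractionalSupport U q x) by
      have := card_fractionalSupport_ne_one hx hsum; omega)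
  have hxa := (mem_filter.1 ha).2
  have hxb := (mem_filter.1 hb).2
  have hmix (a b : α) (ha : a ∈ fractionalSupport U q x) (hb : b ∈ fractionalSupport U q x)
      (hab : a ≠ b) : IsSubsetMixture U k q (transfer q x a b) :=
    ih _ (hn ▸ card_fractionalSupport_transfer_lt ha hb hab)
      (transfer_mem_Icc hx (mem_filter.1 ha).1 (mem_filter.1 hb).1 hab)
      (by rw [sum_transfer (mem_filter.1 ha).1 (mem_filter.1 hb).1, hsum]) rfl
  set ε := min (q - x a) (x b)
  set ε' := min (q - x b) (x a)
  have hε : 0 < ε := lt_min (by linarith [hxa.2]) hxb.1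
  have hε' : 0 < ε' := lt_min (by linarith [hxb.2]) hxa.1
  have hconv := convex_setOf_isSubsetMixture U k q (hmix a b ha hb hab) (hmix b a hb ha hab.symm)
    (a := ε' / (ε + ε')) (b := ε / (ε + ε')) (by positivity) (by positivity)
    (by field_simp; ring)
  rw [Set.mem_ofPred_eq] at hconv
  convert hconv using 1
  ext i
  simp only [transfer, Pi.add_apply, Pi.smul_apply, Pi.sub_apply, smul_eq_mul]
  field_simp
  ring

end SubsetMixture

section MarginalLP

variable (N : ℕ) (F r : ℕ → ℝ) (μ1 : ℝ)

/-- `q_k`, the probability that exactly `k` agents are recommended to move. -/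
def lpMass (p : ℕ → ℕ → ℝ) (k : ℕ) : ℝ :=
  1 / (k : ℝ) * ∑ j ∈ Icc 1 N, p j k

def moveGain (p : ℕ → ℕ → ℝ) (i : ℕ) : ℝ :=
  ∑ k ∈ Icc 1 N, p i k * (F k - r i)

def stayGain (p : ℕ → ℕ → ℝ) (i : ℕ) : ℝ :=
  ∑ k ∈ Icc 1 (N - 1), (lpMass N p k - p i k) * (F (k + 1) - r i) +
    (1 - ∑ k ∈ Icc 1 N, lpMass N p k) * (F 1 - r i)

def lpValue (p : ℕ → ℕ → ℝ) : ℝ :=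
  ∑ k ∈ Icc 1 N, ∑ i ∈ Icc 1 N, p i k * (F k - r i)

structure IsLPFeasible (p : ℕ → ℕ → ℝ) : Prop where
  nonneg : ∀ i ∈ Icc 1 N, ∀ k ∈ Icc 1 N, 0 ≤ p i k
  move : ∀ i ∈ Icc 1 N, 0 ≤ moveGain N F r p i
  stay : ∀ i ∈ Icc 1 N, stayGain N F r p i ≤ (1 - μ1) / μ1 * r i
  mass : ∑ k ∈ Icc 1 N, lpMass N p k ≤ 1
  mul_le_sum : ∀ i ∈ Icc 1 N, ∀ k ∈ Icc 1 N, (k : ℝ) * p i k ≤ ∑ j ∈ Icc 1 N, p j k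

variable {N F r μ1} {p p' : ℕ → ℕ → ℝ}

lemma mul_lpMass {k : ℕ} (hk : k ≠ 0) : k * lpMass N p k = ∑ j ∈ Icc 1 N, p j k := by
  rw [lpMass, ← mul_assoc, mul_one_div_cancel (Nat.cast_ne_zero.2 hk), one_mul]

lemma IsLPFeasible.mem_Icc_lpMass (hp : IsLPFeasible N F r μ1 p) {i k : ℕ} (hi : i ∈ Icc 1 N)
    (hk : k ∈ Icc 1 N) : p i k ∈ Set.Icc 0 (lpMass N p k) := by
  have hk0 : (0 : ℝ) < k := by exact_mod_cast (mem_Icc.1 hk).1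
  refine ⟨hp.nonneg i hi k hk, le_of_mul_le_mul_left ?_ hk0⟩
  rw [mul_lpMass (Nat.one_le_iff_ne_zero.1 (mem_Icc.1 hk).1)]
  exact hp.mul_le_sum i hi k hk

variable (h : ∀ i ∈ Icc 1 N, ∀ k ∈ Icc 1 N, p i k = p' i k)
include h

lemma lpMass_congr {k : ℕ} (hk : k ∈ Icc 1 N) : lpMass N p k = lpMass N p' k := by
  simp only [lpMass, sum_congr rfl fun j hj => h j hj k hk]

lemma moveGain_congr {i : ℕ} (hi : i ∈ Icc 1 N) : moveGain N F r p i = moveGain N F r p' i :=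
  sum_congr rfl fun k hk => by rw [h i hi k hk]

lemma stayGain_congr {i : ℕ} (hi : i ∈ Icc 1 N) : stayGain N F r p i = stayGain N F r p' i := by
  have hsub : Icc 1 (N - 1) ⊆ Icc 1 N := Icc_subset_Icc_right (N.sub_le 1)
  rw [stayGain, stayGain, sum_congr rfl fun k hk => lpMass_congr h hk]
  congr 1
  exact sum_congr rfl fun k hk => by rw [lpMass_congr h (hsub hk), h i hi k (hsub hk)]

lemma lpValue_congr : lpValue N F r p = lpValue N F r p' :=
  sum_congr rfl fun k hk => sum_congr rfl fun i hi => by rw [h i hi k hk]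

end MarginalLP

section SchemeMarginals

lemma card_le_of_mem_powerset_Icc {N : ℕ} {S : Finset ℕ} (hS : S ∈ (Icc 1 N).powerset) :
    #S ≤ N := by
  simpa using card_le_card (mem_powerset.1 hS)

variable (N : ℕ) (φ : ℕ → Finset ℕ → ℝ)

lemma sum_filter_mem_mul_card (i : ℕ) (c : ℕ → ℝ) :
    ∑ S ∈ (Icc 1 N).powerset with i ∈ S, φ 1 S * c #S = ∑ k ∈ Icc 1 N, pOf N φ i k * c k := by
  have hcard : ∀ S ∈ (Icc 1 N).powerset.filter (i ∈ ·), #S ∈ Icc 1 N := fun S hS =>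
    mem_Icc.2 ⟨card_pos.2 ⟨i, (mem_filter.1 hS).2⟩,
      card_le_of_mem_powerset_Icc (mem_filter.1 hS).1⟩
  rw [← sum_fiberwise_of_maps_to hcard]
  refine sum_congr rfl fun k _ => ?_
  rw [pOf, sum_mul, filter_filter]
  exact sum_congr rfl fun S hS => by rw [(mem_filter.1 hS).2.2]

lemma sum_pOf (k : ℕ) :
    ∑ j ∈ Icc 1 N, pOf N φ j k = k * ∑ S ∈ (Icc 1 N).powerset with #S = k, φ 1 S := by
  simp only [pOf]
  rw [sum_comm' (t' := {S ∈ (Icc 1 N).powerset | #S = k}) (s' := id)]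
  · rw [mul_sum]
    refine sum_congr rfl fun S hS => ?_
    rw [sum_const, id, (mem_filter.1 hS).2, nsmul_eq_mul]
  · intro j S
    simp only [mem_filter, mem_powerset, id]
    constructor
    · rintro ⟨-, hS, hj, rfl⟩
      exact ⟨hj, hS, rfl⟩
    · rintro ⟨hj, hS, rfl⟩
      exact ⟨hS hj, hS, hj, rfl⟩

lemma lpMass_pOf {k : ℕ} (hk : k ≠ 0) :
    lpMass N (pOf N φ) k = ∑ S ∈ (Icc 1 N).powerset with #S = k, φ 1 S := by
  rw [lpMass, sum_pOf, ← mul_assoc, one_div_mul_cancel (Nat.cast_ne_zero.2 hk), one_mul]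

/-- The only `N`-subset of `{1, …, N}` contains every agent. -/
lemma pOf_self_eq_lpMass {i : ℕ} (hi : i ∈ Icc 1 N) : pOf N φ i N = lpMass N (pOf N φ) N := by
  rw [lpMass_pOf N φ (by have := mem_Icc.1 hi; omega), pOf]
  refine sum_congr (filter_congr fun S hS => ?_) fun _ _ => rfl
  refine ⟨fun h => h.2, fun h => ⟨?_, h⟩⟩
  rw [Finset.eq_of_subset_of_card_le (mem_powerset.1 hS) (by simp [h])]
  exact hi

lemma sum_powerset_mul_card (c : ℕ → ℝ) :
    ∑ S ∈ (Icc 1 N).powerset, φ 1 S * c #S =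
      φ 1 ∅ * c 0 + ∑ k ∈ Icc 1 N, lpMass N (pOf N φ) k * c k := by
  have hcard : ∀ S ∈ (Icc 1 N).powerset, #S ∈ Icc 0 N := fun S hS =>
    mem_Icc.2 ⟨Nat.zero_le _, card_le_of_mem_powerset_Icc hS⟩
  rw [← sum_fiberwise_of_maps_to hcard, ← add_sum_Ioc_eq_sum_Icc (Nat.zero_le N),
    ← Icc_add_one_left_eq_Ioc, zero_add]
  congr 1
  · simp [filter_eq']
  · refine sum_congr rfl fun k hk => ?_
    rw [lpMass_pOf N φ (Nat.one_le_iff_ne_zero.1 (mem_Icc.1 hk).1), sum_mul]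
    exact sum_congr rfl fun S hS => by rw [(mem_filter.1 hS).2]

lemma sum_filter_notMem_mul_eq_stayGain (F r : ℕ → ℝ)
    (hφ : ∑ S ∈ (Icc 1 N).powerset, φ 1 S = 1) {i : ℕ} (hi : i ∈ Icc 1 N) :
    ∑ S ∈ (Icc 1 N).powerset with i ∉ S, φ 1 S * ((1 : ℝ) * F (#S + 1) - r i) =
      stayGain N F r (pOf N φ) i := by
  have hpeel (g : ℕ → ℝ) : ∑ k ∈ Icc 1 N, g k = ∑ k ∈ Icc 1 (N - 1), g k + g N := by
    rw [← insert_Icc_sub_one_right_eq_Icc ((mem_Icc.1 hi).1.trans (mem_Icc.1 hi).2),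
      sum_insert (by simp; omega), add_comm]
  have htot := sum_powerset_mul_card N φ (fun n => F (n + 1) - r i)
  have hmem := sum_filter_mem_mul_card N φ i (fun n => F (n + 1) - r i)
  have hmass := sum_powerset_mul_card N φ (fun _ => 1)
  rw [← sum_filter_add_sum_filter_not _ (i ∈ ·), hmem] at htot
  simp only [mul_one, hφ] at hmass
  rw [hpeel, hpeel, pOf_self_eq_lpMass N φ hi] at htot
  simp only [one_mul, stayGain, sub_mul, sum_sub_distrib]
  linear_combination htot - (F 1 - r i) * hmass

lemma sum_mul_W_one (F r : ℕ → ℝ) :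
    ∑ S ∈ (Icc 1 N).powerset, φ 1 S * W F r 1 S = lpValue N F r (pOf N φ) := by
  have hW (S : Finset ℕ) : W F r 1 S = ∑ i ∈ S, (F #S - r i) := by
    simp [W, sum_sub_distrib]
  calc ∑ S ∈ (Icc 1 N).powerset, φ 1 S * W F r 1 S
      = ∑ S ∈ (Icc 1 N).powerset, ∑ i ∈ S, φ 1 S * (F #S - r i) := by
        simp only [hW, mul_sum]
    _ = ∑ i ∈ Icc 1 N, ∑ S ∈ (Icc 1 N).powerset with i ∈ S, φ 1 S * (F #S - r i) := by
        refine sum_comm' fun S i => ?_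
        simp only [mem_filter, mem_powerset]
        exact ⟨fun ⟨hS, hi⟩ => ⟨⟨hS, hi⟩, hS hi⟩, fun ⟨⟨hS, hi⟩, _⟩ => ⟨hS, hi⟩⟩
    _ = ∑ i ∈ Icc 1 N, ∑ k ∈ Icc 1 N, pOf N φ i k * (F k - r i) :=
        sum_congr rfl fun i _ => sum_filter_mem_mul_card N φ i (fun n => F n - r i)
    _ = lpValue N F r (pOf N φ) := sum_comm

end SchemeMarginals

section SchemeToLP

variable {N : ℕ} {F r : ℕ → ℝ} {μ1 : ℝ} {φ : ℕ → Finset ℕ → ℝ}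

lemma IsScheme.pOf_nonneg (hφ : IsScheme N φ) (i k : ℕ) : 0 ≤ pOf N φ i k :=
  sum_nonneg fun S hS => hφ.1 1 (by simp) S (mem_filter.1 hS).1

lemma IsScheme.pOf_le (hφ : IsScheme N φ) (i k : ℕ) :
    pOf N φ i k ≤ ∑ S ∈ (Icc 1 N).powerset with #S = k, φ 1 S :=
  sum_le_sum_of_subset_of_nonneg
    (fun S => by simp only [mem_filter]; exact fun h => ⟨h.1, h.2.2⟩)
    fun S hS _ => hφ.1 1 (by simp) S (mem_filter.1 hS).1

theorem IsScheme.isLPFeasible_pOf (hrnn : ∀ i, i ≤ N → 0 ≤ r i) (hμ0 : 0 < μ1)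
    (hμ1 : μ1 < 1) (hφ : IsScheme N φ) (hper : Persuasive N F r μ1 φ) :
    IsLPFeasible N F r μ1 (pOf N φ) := by
  have hφ0 := hφ.1 0 (by simp)
  have hφ1 := hφ.2 1 (by simp)
  refine ⟨fun i _ k _ => hφ.pOf_nonneg i k, fun i hi => ?_, fun i hi => ?_, ?_,
    fun i _ k _ => ?_⟩
  · obtain ⟨hmove, -⟩ := hper i hi
    have hri := hrnn i (mem_Icc.1 hi).2
    have h0 : ∑ S ∈ (Icc 1 N).powerset with i ∈ S, φ 0 S * ((0 : ℝ) * F #S - r i) ≤ 0 :=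
      sum_nonpos fun S hS =>
        mul_nonpos_of_nonneg_of_nonpos (hφ0 S (mem_filter.1 hS).1) (by simpa)
    simp only [one_mul, sum_filter_mem_mul_card N φ i (fun n => F n - r i)] at hmove
    rw [moveGain]
    nlinarith
  · obtain ⟨-, hstay⟩ := hper i hi
    have hri := hrnn i (mem_Icc.1 hi).2
    have h0 : -r i ≤
        ∑ S ∈ (Icc 1 N).powerset with i ∉ S, φ 0 S * ((0 : ℝ) * F (#S + 1) - r i) := by
      have hle : ∑ S ∈ (Icc 1 N).powerset with i ∉ S, φ 0 S ≤ 1 :=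
        hφ.2 0 (by simp) ▸
          sum_le_sum_of_subset_of_nonneg (filter_subset _ _) fun S hS _ => hφ0 S hS
      simp only [zero_mul, zero_sub, mul_neg, sum_neg_distrib, ← sum_mul]
      nlinarith
    rw [sum_filter_notMem_mul_eq_stayGain N φ F r hφ1 hi] at hstay
    rw [div_mul_eq_mul_div, le_div_iff₀ hμ0]
    nlinarith
  · have hmass := sum_powerset_mul_card N φ (fun _ => 1)
    simp only [mul_one, hφ1] at hmass
    linarith [hφ.1 1 (by simp) ∅ (empty_mem_powerset _)]
  · rw [sum_pOf]
    exact mul_le_mul_of_nonneg_left (hφ.pOf_le i k) k.cast_nonneg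

theorem IsScheme.EW_le_mul_lpValue_pOf (hrnn : ∀ i, i ≤ N → 0 ≤ r i) (hμ1 : μ1 ≤ 1)
    (hφ : IsScheme N φ) : EW N F r μ1 φ ≤ μ1 * lpValue N F r (pOf N φ) := by
  have h0 : ∑ S ∈ (Icc 1 N).powerset, φ 0 S * W F r 0 S ≤ 0 := by
    refine sum_nonpos fun S hS => mul_nonpos_of_nonneg_of_nonpos (hφ.1 0 (by simp) S hS) ?_
    simp only [W, Nat.cast_zero, zero_mul, zero_sub, neg_nonpos]
    exact sum_nonneg fun i hi => hrnn i (mem_Icc.1 (mem_powerset.1 hS hi)).2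
  rw [EW, sum_mul_W_one]
  nlinarith

end SchemeToLP

section LPToScheme

variable {N : ℕ} {F r : ℕ → ℝ} {μ1 : ℝ}

def schemeOfMixtures (N : ℕ) (ψ : ℕ → Finset ℕ → ℝ) (θ : ℕ) (S : Finset ℕ) : ℝ :=
  if θ = 0 then (if S = ∅ then 1 else 0)
  else if S = ∅ then 1 - ∑ k ∈ Icc 1 N, ∑ T ∈ (Icc 1 N).powersetCard k, ψ k T else ψ #S S

variable {ψ : ℕ → Finset ℕ → ℝ}

lemma pOf_schemeOfMixtures (i k : ℕ) :
    pOf N (schemeOfMixtures N ψ) i k = ∑ S ∈ (Icc 1 N).powersetCard k with i ∈ S, ψ k S := by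
  rw [pOf, powersetCard_eq_filter, filter_filter]
  refine sum_congr (filter_congr fun _ _ => and_comm) fun S hS => ?_
  obtain ⟨-, rfl, hiS⟩ := mem_filter.1 hS
  simp [schemeOfMixtures, ne_empty_of_mem hiS]

lemma sum_filter_card_schemeOfMixtures {k : ℕ} (hk : k ≠ 0) :
    ∑ S ∈ (Icc 1 N).powerset with #S = k, schemeOfMixtures N ψ 1 S =
      ∑ T ∈ (Icc 1 N).powersetCard k, ψ k T := by
  rw [powersetCard_eq_filter]
  refine sum_congr rfl fun S hS => ?_
  obtain ⟨-, rfl⟩ := mem_filter.1 hS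
  rw [schemeOfMixtures, if_neg one_ne_zero, if_neg (by rintro rfl; simp at hk)]

lemma sum_schemeOfMixtures_one :
    ∑ S ∈ (Icc 1 N).powerset, schemeOfMixtures N ψ 1 S = 1 := by
  have h := sum_powerset_mul_card N (schemeOfMixtures N ψ) (fun _ => 1)
  simp only [mul_one] at h
  have hk0 {k : ℕ} (hk : k ∈ Icc 1 N) : k ≠ 0 := Nat.one_le_iff_ne_zero.1 (mem_Icc.1 hk).1
  rw [h, sum_congr rfl fun k hk =>
    (lpMass_pOf N _ (hk0 hk)).trans (sum_filter_card_schemeOfMixtures (hk0 hk))]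
  simp [schemeOfMixtures]

lemma isScheme_schemeOfMixtures
    (hψ : ∀ k ∈ Icc 1 N, ∀ S ∈ (Icc 1 N).powersetCard k, 0 ≤ ψ k S)
    (hmass : ∑ k ∈ Icc 1 N, ∑ T ∈ (Icc 1 N).powersetCard k, ψ k T ≤ 1) :
    IsScheme N (schemeOfMixtures N ψ) := by
  refine ⟨fun θ hθ S hS => ?_, fun θ hθ => ?_⟩ <;>
    obtain rfl | rfl : θ = 0 ∨ θ = 1 := by simpa using hθ
  · simp only [schemeOfMixtures, if_true]
    split_ifs <;> norm_num
  · simp only [schemeOfMixtures, one_ne_zero, if_false]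
    split_ifs with hS0
    · linarith
    · have hpos : #S ≠ 0 := by simpa using hS0
      exact hψ _ (mem_Icc.2 ⟨Nat.one_le_iff_ne_zero.2 hpos, card_le_of_mem_powerset_Icc hS⟩) S
        (mem_powersetCard.2 ⟨mem_powerset.1 hS, rfl⟩)
  · simp [schemeOfMixtures]
  · exact sum_schemeOfMixtures_one

variable {p : ℕ → ℕ → ℝ}

lemma persuasive_schemeOfMixtures (hμ0 : 0 < μ1) (hp : IsLPFeasible N F r μ1 p)
    (hψ : ∀ i ∈ Icc 1 N, ∀ k ∈ Icc 1 N, pOf N (schemeOfMixtures N ψ) i k = p i k) :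
    Persuasive N F r μ1 (schemeOfMixtures N ψ) := by
  intro i hi
  constructor
  · have h0 : ∑ S ∈ (Icc 1 N).powerset with i ∈ S,
        schemeOfMixtures N ψ 0 S * ((0 : ℝ) * F #S - r i) = 0 := by
      simp [schemeOfMixtures]
    rw [h0]
    simp only [one_mul, sum_filter_mem_mul_card N _ i (fun n => F n - r i)]
    have hmove := hp.move i hi
    rw [← moveGain_congr hψ hi] at hmove
    simpa [moveGain] using mul_nonneg hμ0.le hmove
  · have h0 : ∑ S ∈ (Icc 1 N).powerset with i ∉ S,
        schemeOfMixtures N ψ 0 S * ((0 : ℝ) * F (#S + 1) - r i) = -r i := by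
      simp [schemeOfMixtures]
    have hstay := hp.stay i hi
    rw [← stayGain_congr hψ hi, div_mul_eq_mul_div, le_div_iff₀ hμ0] at hstay
    rw [h0, sum_filter_notMem_mul_eq_stayGain N _ F r sum_schemeOfMixtures_one hi]
    linarith

lemma EW_schemeOfMixtures :
    EW N F r μ1 (schemeOfMixtures N ψ) = μ1 * lpValue N F r (pOf N (schemeOfMixtures N ψ)) := by
  rw [EW, sum_mul_W_one]
  simp [schemeOfMixtures, W]

theorem IsLPFeasible.exists_scheme (hμ0 : 0 < μ1) (hp : IsLPFeasible N F r μ1 p) :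
    ∃ φ, IsScheme N φ ∧ Persuasive N F r μ1 φ ∧ EW N F r μ1 φ = μ1 * lpValue N F r p := by
  have hmix (k : ℕ) (hk : k ∈ Icc 1 N) :
      IsSubsetMixture (Icc 1 N) k (lpMass N p k) (fun i => p i k) := by
    have hk0 : k ≠ 0 := Nat.one_le_iff_ne_zero.1 (mem_Icc.1 hk).1
    refine isSubsetMixture_of_mem_Icc ?_ (fun i hi => hp.mem_Icc_lpMass hi hk)
      (mul_lpMass hk0).symm
    exact mul_nonneg (by positivity) (sum_nonneg fun j hj => hp.nonneg j hj k hk)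
  choose! ψ hψ0 hψmass hψ using hmix
  have hpOf : ∀ i ∈ Icc 1 N, ∀ k ∈ Icc 1 N, pOf N (schemeOfMixtures N ψ) i k = p i k :=
    fun i hi k hk => (pOf_schemeOfMixtures i k).trans (hψ k hk i hi)
  refine ⟨schemeOfMixtures N ψ, isScheme_schemeOfMixtures hψ0 ?_,
    persuasive_schemeOfMixtures hμ0 hp hpOf, by rw [EW_schemeOfMixtures, lpValue_congr hpOf]⟩
  rw [sum_congr rfl hψmass]
  exact hp.mass

end LPToScheme

lemma Real.sSup_eq_mul_sSup_of_forall_exists_le {A B : Set ℝ} {c : ℝ} (hc : 0 ≤ c)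
    (hBA : ∀ b ∈ B, c * b ∈ A) (hAB : ∀ a ∈ A, ∃ b ∈ B, a ≤ c * b) : sSup A = c * sSup B := by
  rw [← smul_eq_mul, ← Real.sSup_smul_of_nonneg hc]
  refine csSup_eq_csSup_of_forall_exists_le (fun a ha => ?_) fun y hy => ?_
  · obtain ⟨b, hb, hab⟩ := hAB a ha
    exact ⟨c * b, Set.smul_mem_smul_set hb, hab⟩
  · obtain ⟨b, hb, rfl⟩ := hy
    exact ⟨c * b, hBA b hb, le_rfl⟩

theorem stmt6_general (N : ℕ) (F r : ℕ → ℝ) (hrnn : ∀ i, i ≤ N → 0 ≤ r i)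
    (μ1 : ℝ) (hμ0 : 0 < μ1) (hμ1 : μ1 < 1) :
    sSup {w : ℝ | ∃ φ : ℕ → Finset ℕ → ℝ,
        IsScheme N φ ∧ Persuasive N F r μ1 φ ∧ w = EW N F r μ1 φ} =
    μ1 * sSup {v : ℝ | ∃ p : ℕ → ℕ → ℝ,
        (∀ i ∈ Icc 1 N, ∀ k ∈ Icc 1 N, 0 ≤ p i k) ∧
        (∀ i ∈ Icc 1 N, 0 ≤ ∑ k ∈ Icc 1 N, p i k * (F k - r i)) ∧
        (∀ i ∈ Icc 1 N,
          ∑ k ∈ Icc 1 (N - 1),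
              ((1 / (k : ℝ)) * (∑ j ∈ Icc 1 N, p j k) - p i k) * (F (k + 1) - r i) +
            (1 - ∑ k ∈ Icc 1 N, (1 / (k : ℝ)) * ∑ j ∈ Icc 1 N, p j k) * (F 1 - r i)
            ≤ ((1 - μ1) / μ1) * r i) ∧
        (∑ k ∈ Icc 1 N, (1 / (k : ℝ)) * ∑ i ∈ Icc 1 N, p i k ≤ 1) ∧
        (∀ i ∈ Icc 1 N, ∀ k ∈ Icc 1 N, (k : ℝ) * p i k ≤ ∑ j ∈ Icc 1 N, p j k) ∧
        v = ∑ k ∈ Icc 1 N, ∑ i ∈ Icc 1 N, p i k * (F k - r i)} := by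
  refine Real.sSup_eq_mul_sSup_of_forall_exists_le hμ0.le ?_ ?_
  · rintro v ⟨p, h1, h2, h3, h4, h5, rfl⟩
    obtain ⟨φ, hφ, hper, hEW⟩ := IsLPFeasible.exists_scheme hμ0 ⟨h1, h2, h3, h4, h5⟩
    exact ⟨φ, hφ, hper, hEW.symm⟩
  · rintro w ⟨φ, hφ, hper, rfl⟩
    obtain ⟨h1, h2, h3, h4, h5⟩ := hφ.isLPFeasible_pOf hrnn hμ0 hμ1 hper
    exact ⟨_, ⟨pOf N φ, h1, h2, h3, h4, h5, rfl⟩, hφ.EW_le_mul_lpValue_pOf hrnn hμ1.le⟩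

/-- the optimal value over persuasive straightforward signaling schemes
equals μ(1) times the optimal value of the marginal linear program (LP.2). -/
theorem stmt6 (N : ℕ) (hN : 1 ≤ N) (F r : ℕ → ℝ)
    (hFnn : ∀ n, n ≤ N → 0 ≤ F n) (hF01 : F 0 = F 1)
    (hFmono : ∀ n, n + 1 ≤ N → F (n + 1) ≤ F n)
    (hr0 : r 0 = 0) (hrnn : ∀ i, i ≤ N → 0 ≤ r i)
    (hrmono : ∀ i, i + 1 ≤ N → r i ≤ r (i + 1))
    (μ1 : ℝ) (hμ0 : 0 < μ1) (hμ1 : μ1 < 1) :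
    sSup {w : ℝ | ∃ φ : ℕ → Finset ℕ → ℝ,
        IsScheme N φ ∧ Persuasive N F r μ1 φ ∧ w = EW N F r μ1 φ} =
    μ1 * sSup {v : ℝ | ∃ p : ℕ → ℕ → ℝ,
        (∀ i ∈ Icc 1 N, ∀ k ∈ Icc 1 N, 0 ≤ p i k) ∧
        (∀ i ∈ Icc 1 N, 0 ≤ ∑ k ∈ Icc 1 N, p i k * (F k - r i)) ∧
        (∀ i ∈ Icc 1 N,
          ∑ k ∈ Icc 1 (N - 1),
              ((1 / (k : ℝ)) * (∑ j ∈ Icc 1 N, p j k) - p i k) * (F (k + 1) - r i) +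
            (1 - ∑ k ∈ Icc 1 N, (1 / (k : ℝ)) * ∑ j ∈ Icc 1 N, p j k) * (F 1 - r i)
            ≤ ((1 - μ1) / μ1) * r i) ∧
        (∑ k ∈ Icc 1 N, (1 / (k : ℝ)) * ∑ i ∈ Icc 1 N, p i k ≤ 1) ∧
        (∀ i ∈ Icc 1 N, ∀ k ∈ Icc 1 N, (k : ℝ) * p i k ≤ ∑ j ∈ Icc 1 N, p j k) ∧
        v = ∑ k ∈ Icc 1 N, ∑ i ∈ Icc 1 N, p i k * (F k - r i)} :=
  stmt6_general N F r hrnn μ1 hμ0 hμ1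

end
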